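/- arXiv:1707.02741 — 4 statements merged into one kernel-verified Lean document; each statement's English description precedes it below -/
import Mathlib

section
/- Let (τ_n)_{n∈ℕ} be any sequence with each τ_n ∈ {c1, c2}, and suppose that for some m ∈ ℕ one has τ_{m+1} = c1 and τ_{m+2} = c2. Then for every n ≥ m+2, the word τ_0 τ_1 ⋯ τ_m(1) is a proper prefix of the word τ_0 τ_1 ⋯ τ_n(1). Consequently, if the sequence (τ_n) contains infinitely many occurrences of c1 and of c2, the words τ_0⋯τ_n(1) converge to an infinite word. -/
/-- Letters `0, 1, 2` stand for the letters `1, 2, 3` of the paper. -/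
abbrev Letter := Fin 3

/-- A finite word over the alphabet `{1,2,3}`. -/
abbrev Word := List Letter

/-- Apply a substitution (given by its values on letters) to a finite word. -/
def applySub (σ : Letter → Word) (w : Word) : Word := (w.map σ).flatten

/-- The substitution `c₁ : 1 ↦ 1, 2 ↦ 13, 3 ↦ 2`. -/
def c1 : Letter → Word := ![[0], [0, 2], [1]]

/-- The substitution `c₂ : 1 ↦ 2, 2 ↦ 13, 3 ↦ 3`. -/
def c2 : Letter → Word := ![[1], [0, 2], [2]]

/-- `comps τ r k` is the composition `τ_r ∘ τ_{r+1} ∘ ⋯ ∘ τ_{r+k-1}` acting on words. -/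
def comps (τ : ℕ → Letter → Word) : ℕ → ℕ → Word → Word
  | _, 0 => id
  | r, k + 1 => applySub (τ r) ∘ comps τ (r + 1) k

lemma applySub_append (σ : Letter → Word) (u v : Word) :
    applySub σ (u ++ v) = applySub σ u ++ applySub σ v := by
  simp [applySub]

lemma applySub_cons (σ : Letter → Word) (a : Letter) (w : Word) :
    applySub σ (a :: w) = σ a ++ applySub σ w := by
  simp [applySub]

lemma comps_zero (τ : ℕ → Letter → Word) (r : ℕ) (w : Word) : comps τ r 0 w = w := rfl

lemma comps_succ (τ : ℕ → Letter → Word) (r k : ℕ) (w : Word) :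
    comps τ r (k+1) w = applySub (τ r) (comps τ (r+1) k w) := rfl

lemma comps_append (τ : ℕ → Letter → Word) (r k : ℕ) (u v : Word) :
    comps τ r k (u ++ v) = comps τ r k u ++ comps τ r k v := by
  induction k generalizing r with
  | zero => rfl
  | succ k ih => simp [comps_succ, ih, applySub_append]

lemma comps_add (τ : ℕ → Letter → Word) (r a b : ℕ) (w : Word) :
    comps τ r (a + b) w = comps τ r a (comps τ (r + a) b w) := by
  induction a generalizing r with
  | zero => simp [comps_zero]
  | succ a ih =>
      have : r + (a + 1) = (r + 1) + a := by omega
      rw [show a + 1 + b = (a + b) + 1 by omega, comps_succ, ih, comps_succ, this]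

lemma comps_ne_nil (τ : ℕ → Letter → Word) (hτ : ∀ n, τ n = c1 ∨ τ n = c2)
    (r k : ℕ) (w : Word) (hw : w ≠ []) : comps τ r k w ≠ [] := by
  induction k generalizing r w with
  | zero => exact hw
  | succ k ih =>
      rw [comps_succ]
      have h := ih (r+1) w hw
      obtain ⟨a, t, ht⟩ := List.exists_cons_of_ne_nil h
      rw [ht, applySub_cons]
      rcases hτ r with h' | h' <;> rw [h'] <;> fin_cases a <;> simp [c1, c2]

lemma head_01 (τ : ℕ → Letter → Word) (hτ : ∀ n, τ n = c1 ∨ τ n = c2) (r k : ℕ) :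
    ∃ w, comps τ r k [0] = 0 :: w ∨ comps τ r k [0] = 1 :: w := by
  induction k generalizing r with
  | zero => exact ⟨[], Or.inl rfl⟩
  | succ k ih =>
      obtain ⟨w, hw | hw⟩ := ih (r+1) <;> rw [comps_succ, hw, applySub_cons] <;>
        rcases hτ r with h' | h' <;> rw [h'] <;> first
        | exact ⟨_, Or.inl rfl⟩
        | exact ⟨_, Or.inr rfl⟩

lemma key (τ : ℕ → Letter → Word) (hτ : ∀ n, τ n = c1 ∨ τ n = c2) (m j : ℕ)
    (h1 : τ (m+1) = c1) (h2 : τ (m+2) = c2) :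
    ∃ b w, comps τ (m+1) (j+2) [0] = 0 :: b :: w := by
  have e : comps τ (m+1) (j+2) [0]
      = applySub c1 (applySub c2 (comps τ (m+3) j [0])) := by
    rw [show j + 2 = (j+1) + 1 by omega, comps_succ, h1,
        show j + 1 = j + 1 by rfl, comps_succ, h2]
  obtain ⟨w, hw | hw⟩ := head_01 τ hτ (m+3) j
  all_goals rw [e, hw, applySub_cons]
  · have : c2 0 = [1] := rfl
    rw [this]
    rw [show ((([1] : Word) ++ applySub c2 w)) = 1 :: applySub c2 w from rfl, applySub_cons]
    exact ⟨_, _, rfl⟩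
  · have : c2 1 = [0, 2] := rfl
    rw [this]
    rw [show ((([0, 2] : Word) ++ applySub c2 w)) = 0 :: 2 :: applySub c2 w from rfl,
        applySub_cons, applySub_cons]
    exact ⟨_, _, rfl⟩

lemma part1 (τ : ℕ → Letter → Word) (hτ : ∀ n, τ n = c1 ∨ τ n = c2) (m : ℕ)
    (h1 : τ (m+1) = c1) (h2 : τ (m+2) = c2) (n : ℕ) (hn : m + 2 ≤ n) :
    comps τ 0 (m + 1) [0] <+: comps τ 0 (n + 1) [0] ∧
    (comps τ 0 (m + 1) [0]).length < (comps τ 0 (n + 1) [0]).length := by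
  obtain ⟨j, hj⟩ : ∃ j, n - m = j + 2 := ⟨n - m - 2, by omega⟩
  obtain ⟨b, w, hbw⟩ := key τ hτ m j h1 h2
  have e : comps τ 0 (n+1) [0]
      = comps τ 0 (m+1) [0] ++ comps τ 0 (m+1) (b :: w) := by
    rw [show n + 1 = (m+1) + (n-m) by omega, comps_add, Nat.zero_add, hj, hbw,
        show (0 : Letter) :: b :: w = [0] ++ (b :: w) from rfl, comps_append]
  rw [e]
  constructor
  · exact ⟨_, rfl⟩
  · rw [List.length_append]
    have := comps_ne_nil τ hτ 0 (m+1) (b :: w) (by simp)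
    have := List.length_pos_iff.mpr this
    omega

lemma switch (τ : ℕ → Letter → Word) (hτ : ∀ n, τ n = c1 ∨ τ n = c2)
    (hc1 : ∀ N, ∃ n, N ≤ n ∧ τ n = c1) (hc2 : ∀ N, ∃ n, N ≤ n ∧ τ n = c2) :
    ∀ N, ∃ m, N ≤ m ∧ τ (m+1) = c1 ∧ τ (m+2) = c2 := by
  intro N
  obtain ⟨p, hp, hpc⟩ := hc1 (N+1)
  obtain ⟨q, hq, hqc⟩ := hc2 (p+1)
  have hex : ∃ k, p < k ∧ τ k = c2 := ⟨q, by omega, hqc⟩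
  classical
  have hkspec := Nat.find_spec hex
  set k := Nat.find hex with hk
  have hmin : ∀ j < k, ¬(p < j ∧ τ j = c2) := fun j hj => Nat.find_min hex hj
  have hk1 : τ (k-1) = c1 := by
    rcases Nat.lt_or_ge (k-1) (p+1) with h | h
    · rw [show k - 1 = p by omega]; exact hpc
    · rcases hτ (k-1) with h' | h'
      · exact h'
      · exact absurd ⟨by omega, h'⟩ (hmin (k-1) (by omega))
  refine ⟨k-2, by omega, ?_, ?_⟩
  · rw [show k-2+1 = k-1 by omega]; exact hk1
  · rw [show k-2+2 = k by omega]; exact hkspec.2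

theorem stmt2 (τ : ℕ → Letter → Word) (hτ : ∀ n, τ n = c1 ∨ τ n = c2) :
    (∀ m, τ (m + 1) = c1 → τ (m + 2) = c2 → ∀ n, m + 2 ≤ n →
      comps τ 0 (m + 1) [0] <+: comps τ 0 (n + 1) [0] ∧
      (comps τ 0 (m + 1) [0]).length < (comps τ 0 (n + 1) [0]).length) ∧
    ((∀ N, ∃ n, N ≤ n ∧ τ n = c1) → (∀ N, ∃ n, N ≤ n ∧ τ n = c2) →
      ∃ W : ℕ → Letter, ∀ L : ℕ, ∃ N, ∀ n, N ≤ n →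
        (comps τ 0 (n + 1) [0]).take L = List.ofFn (fun i : Fin L => W i)) := by
  constructor
  · exact fun m h1 h2 n hn => part1 τ hτ m h1 h2 n hn
  · intro hc1 hc2
    classical
    have S := switch τ hτ hc1 hc2
    set M : ℕ → ℕ := fun i => Nat.rec (Classical.choose (S 0))
      (fun _ prev => Classical.choose (S (prev + 2))) i with hM
    have hM0 := Classical.choose_spec (S 0)
    have hMs : ∀ i, M i + 2 ≤ M (i+1) ∧ τ (M (i+1) + 1) = c1 ∧ τ (M (i+1) + 2) = c2 :=
      fun i => Classical.choose_spec (S (M i + 2))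
    have hMc : ∀ i, τ (M i + 1) = c1 ∧ τ (M i + 2) = c2 := by
      intro i
      cases i with
      | zero => exact hM0.2
      | succ i => exact (hMs i).2
    set u : ℕ → Word := fun i => comps τ 0 (M i + 1) [0] with hu
    have F1 : ∀ i n, M i + 2 ≤ n → u i <+: comps τ 0 (n+1) [0] ∧
        (u i).length < (comps τ 0 (n+1) [0]).length :=
      fun i n hn => part1 τ hτ (M i) (hMc i).1 (hMc i).2 n hn
    have chain1 : ∀ i, u i <+: u (i+1) ∧ (u i).length < (u (i+1)).length :=
      fun i => F1 i (M (i+1)) (hMs i).1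
    have chain : ∀ i j, i ≤ j → u i <+: u j := by
      intro i j hij
      induction j with
      | zero => rw [Nat.le_zero.mp hij]
      | succ j ih =>
          rcases Nat.lt_or_ge i (j+1) with h | h
          · exact (ih (by omega)).trans (chain1 j).1
          · rw [show i = j + 1 by omega]
    have ulen : ∀ i, i < (u i).length := by
      intro i
      induction i with
      | zero => exact List.length_pos_iff.mpr (comps_ne_nil τ hτ 0 (M 0 + 1) [0] (by simp))
      | succ i ih => have := (chain1 i).2; omega
    refine ⟨fun i => (u i).getD i 0, ?_⟩
    intro L
    refine ⟨M L + 2, ?_⟩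
    intro n hn
    have hpre : u L <+: comps τ 0 (n+1) [0] := (F1 L n hn).1
    apply List.ext_getElem
    · rw [List.length_take, List.length_ofFn]
      have h1 := ulen L
      have h2 := hpre.length_le
      omega
    · intro i hi1 hi2
      rw [List.getElem_take, List.getElem_ofFn]
      have hiL : i < L := by simpa using hi2
      have hpi : u i <+: comps τ 0 (n+1) [0] := (chain i L (by omega)).trans hpre
      have hii : i < (u i).length := ulen i
      simp only [Fin.val_mk]
      rw [List.getD_eq_getElem _ _ hii]
      exact (hpi.getElem hii).symm
end

section
/- For every i ∈ ℕ and all integers j, k, l, m ≥ 1, every entry of the matrix C1 · C2^{2i+1} · C1^j · C2^k · C1^l · C2^m is positive, and every entry of the matrix C2 · C1^{2i+1} · C2^j · C1^k · C2^l · C1^m is positive. -/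
/-!
Entrywise comparison `0 ≤ B ≤ A` of matrices is preserved by products. Both `C₁` and `C₂` satisfy
`C ≤ C³` entrywise, so `Cⁿ` dominates `C` for odd `n` and `C²` for even `n ≥ 2`. Each of the two
products is therefore bounded below by one of finitely many products of `C₁, C₁², C₂, C₂²`, and
all of these have every entry at least `1` by direct computation.
-/

/-- The matrix `C₁`. -/
def C1 : Matrix (Fin 3) (Fin 3) ℤ := !![1, 1, 0; 0, 0, 1; 0, 1, 0]

/-- The matrix `C₂`. -/
def C2 : Matrix (Fin 3) (Fin 3) ℤ := !![0, 1, 0; 1, 0, 0; 0, 1, 1]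

namespace Matrix

variable {l m n R : Type*} [Semiring R] [PartialOrder R]

def NonnegLE (B A : Matrix m n R) : Prop :=
  (∀ i j, 0 ≤ B i j) ∧ ∀ i j, B i j ≤ A i j

-- Instance search does not unfold `Matrix m n R` to `m → n → R`, so the nested
-- `Fintype.decidableForallFintype` instances are supplied by hand.
instance [Fintype m] [Fintype n] [DecidableLE R] (B A : Matrix m n R) :
    Decidable (NonnegLE B A) :=
  have (P : R → R → Prop) [h : DecidableRel P] : Decidable (∀ i j, P (B i j) (A i j)) :=
    @Fintype.decidableForallFintype m _ (fun i => @Fintype.decidableForallFintype n _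
      (fun j => h (B i j) (A i j)) _) _
  @instDecidableAnd _ _ (this (fun b _ => 0 ≤ b)) (this (· ≤ ·))

namespace NonnegLE

theorem refl {A : Matrix m n R} (hA : ∀ i j, 0 ≤ A i j) : NonnegLE A A :=
  ⟨hA, fun _ _ => le_rfl⟩

theorem trans {A B C : Matrix m n R} (hCB : NonnegLE C B) (hBA : NonnegLE B A) :
    NonnegLE C A :=
  ⟨hCB.1, fun i j => (hCB.2 i j).trans (hBA.2 i j)⟩

theorem pos {A B : Matrix m n R} (hBA : NonnegLE B A) (hB : ∀ i j, 0 < B i j) :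
    ∀ i j, 0 < A i j :=
  fun i j => (hB i j).trans_le (hBA.2 i j)

variable [Fintype m] [IsOrderedRing R]

theorem mul {A B : Matrix l m R} {C D : Matrix m n R} (hBA : NonnegLE B A)
    (hDC : NonnegLE D C) : NonnegLE (B * D) (A * C) := by
  refine ⟨fun i j => ?_, fun i j => ?_⟩
  · exact Finset.sum_nonneg fun k _ => mul_nonneg (hBA.1 i k) (hDC.1 k j)
  · refine Finset.sum_le_sum fun k _ => ?_
    exact mul_le_mul (hBA.2 i k) (hDC.2 k j) (hDC.1 k j) ((hBA.1 i k).trans (hBA.2 i k))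

variable [DecidableEq m]

theorem pow {A B : Matrix m m R} (hBA : NonnegLE B A) : ∀ k : ℕ, NonnegLE (B ^ k) (A ^ k)
  | 0 => by
    rw [pow_zero, pow_zero]
    refine .refl fun i j => ?_
    rw [one_apply]
    split_ifs <;> simp
  | k + 1 => by
    rw [pow_succ, pow_succ]
    exact (hBA.pow k).mul hBA

variable {C : Matrix m m R}

theorem pow_succ_le_pow_add_three (hC : NonnegLE C (C ^ 3)) (k : ℕ) :
    NonnegLE (C ^ (k + 1)) (C ^ (k + 3)) := by
  rw [pow_succ, pow_add]
  exact ((NonnegLE.refl hC.1).pow k).mul hC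

theorem self_le_pow_odd (hC : NonnegLE C (C ^ 3)) : ∀ a : ℕ, NonnegLE C (C ^ (2 * a + 1))
  | 0 => by simpa using NonnegLE.refl hC.1
  | a + 1 => (hC.self_le_pow_odd a).trans (hC.pow_succ_le_pow_add_three (2 * a))

theorem sq_le_pow_even (hC : NonnegLE C (C ^ 3)) : ∀ a : ℕ, NonnegLE (C ^ 2) (C ^ (2 * a + 2))
  | 0 => NonnegLE.refl ((NonnegLE.refl hC.1).pow 2).1
  | a + 1 => (hC.sq_le_pow_even a).trans (hC.pow_succ_le_pow_add_three (2 * a + 1))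

theorem pow_two_sub_mod_two_le_pow (hC : NonnegLE C (C ^ 3)) {n : ℕ} (hn : 1 ≤ n) :
    NonnegLE (C ^ (2 - n % 2)) (C ^ n) := by
  obtain ⟨a, rfl | rfl⟩ := Nat.even_or_odd' n
  · obtain ⟨b, rfl⟩ : ∃ b, a = b + 1 := Nat.exists_eq_succ_of_ne_zero (by omega)
    simpa [Nat.mul_add_mod, mul_add] using hC.sq_le_pow_even b
  · simpa [Nat.mul_add_mod] using hC.self_le_pow_odd a

theorem alternating_product {X Y : Matrix m m R} (hX : NonnegLE X (X ^ 3))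
    (hY : NonnegLE Y (Y ^ 3)) (i : ℕ) {j k l n : ℕ} (hj : 1 ≤ j) (hk : 1 ≤ k) (hl : 1 ≤ l)
    (hn : 1 ≤ n) :
    NonnegLE (X * Y * X ^ (2 - j % 2) * Y ^ (2 - k % 2) * X ^ (2 - l % 2) * Y ^ (2 - n % 2))
      (X * Y ^ (2 * i + 1) * X ^ j * Y ^ k * X ^ l * Y ^ n) := by
  have hX' {e : ℕ} (he : 1 ≤ e) := hX.pow_two_sub_mod_two_le_pow he
  have hY' {e : ℕ} (he : 1 ≤ e) := hY.pow_two_sub_mod_two_le_pow he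
  exact (((((NonnegLE.refl hX.1).mul (hY.self_le_pow_odd i)).mul (hX' hj)).mul (hY' hk)).mul
    (hX' hl)).mul (hY' hn)

end NonnegLE

end Matrix

open Matrix

theorem C1_le_C1_cube : NonnegLE C1 (C1 ^ 3) := by decide

theorem C2_le_C2_cube : NonnegLE C2 (C2 ^ 3) := by decide

theorem one_le_products : ∀ a ∈ ({1, 2} : Finset ℕ), ∀ b ∈ ({1, 2} : Finset ℕ),
    ∀ c ∈ ({1, 2} : Finset ℕ), ∀ d ∈ ({1, 2} : Finset ℕ),
    NonnegLE (of fun _ _ => 1) (C1 * C2 * C1 ^ a * C2 ^ b * C1 ^ c * C2 ^ d) ∧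
    NonnegLE (of fun _ _ => 1) (C2 * C1 * C2 ^ a * C1 ^ b * C2 ^ c * C1 ^ d) := by
  decide

theorem two_sub_mod_two_mem (n : ℕ) : 2 - n % 2 ∈ ({1, 2} : Finset ℕ) := by
  rcases Nat.mod_two_eq_zero_or_one n with h | h <;> simp [h]

theorem stmt3 (i j k l m : ℕ) (hj : 1 ≤ j) (hk : 1 ≤ k) (hl : 1 ≤ l) (hm : 1 ≤ m) :
    (∀ p q : Fin 3,
      0 < (C1 * C2 ^ (2 * i + 1) * C1 ^ j * C2 ^ k * C1 ^ l * C2 ^ m) p q) ∧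
    (∀ p q : Fin 3,
      0 < (C2 * C1 ^ (2 * i + 1) * C2 ^ j * C1 ^ k * C2 ^ l * C1 ^ m) p q) := by
  obtain ⟨h₁, h₂⟩ := one_le_products _ (two_sub_mod_two_mem j) _ (two_sub_mod_two_mem k) _
    (two_sub_mod_two_mem l) _ (two_sub_mod_two_mem m)
  have hJ : ∀ p q : Fin 3, (0 : ℤ) < of (fun _ _ => 1) p q := fun _ _ => one_pos
  exact ⟨(h₁.trans (C1_le_C1_cube.alternating_product C2_le_C2_cube i hj hk hl hm)).pos hJ,
    (h₂.trans (C2_le_C2_cube.alternating_product C1_le_C1_cube i hj hk hl hm)).pos hJ⟩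
end

section
/- Let φ be any composition of finitely many substitutions each equal to c1∘c1 or to c2∘c2. Then the letter 2 does not occur in φ(1) and does not occur in φ(3). Consequently, for any such φ and any i ∈ {1,2}, the letter 2 does not occur in φ(c_i(2)). -/
/-!
The words avoiding the letter `2` are exactly the words over `{1, 3}`, and both squares
`c₁² : 1 ↦ 1, 3 ↦ 13` and `c₂² : 1 ↦ 13, 3 ↦ 3` send `1` and `3` to words over `{1, 3}`.
Hence this set of words is invariant under every composition `φ` of such squares, and it
contains `1`, `3` and `cᵢ(2) = 13`.
-/

open Set

theorem mapsTo_foldr_comp {α : Type*} {s : Set α} (L : List (α → α))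
    (hL : ∀ f ∈ L, MapsTo f s s) : MapsTo (L.foldr (· ∘ ·) id) s s := by
  induction L with
  | nil => exact mapsTo_id s
  | cons f L ih =>
    exact (hL f List.mem_cons_self).comp (ih fun g hg => hL g (List.mem_cons_of_mem f hg))

theorem mem_applySub {σ : Letter → Word} {w : Word} {b : Letter} :
    b ∈ applySub σ w ↔ ∃ a ∈ w, b ∈ σ a := by
  simp [applySub, List.mem_flatten, and_comm]

theorem applySub_applySub (σ τ : Letter → Word) (w : Word) :
    applySub σ (applySub τ w) = applySub (applySub σ ∘ τ) w := by
  simp [applySub, List.map_flatten, List.flatten_flatten, Function.comp_def]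

theorem mapsTo_applySub_avoiding {σ : Letter → Word} {b : Letter}
    (hσ : ∀ a, a ≠ b → b ∉ σ a) : MapsTo (applySub σ) {w | b ∉ w} {w | b ∉ w} := by
  intro w hw
  simp only [mem_ofPred_eq, mem_applySub, not_exists, not_and]
  exact fun a ha => hσ a (ne_of_mem_of_not_mem ha hw)

theorem mapsTo_applySub_sq_avoiding {σ : Letter → Word} {b : Letter}
    (hσ : ∀ a, a ≠ b → b ∉ applySub σ (σ a)) :
    MapsTo (applySub σ ∘ applySub σ) {w | b ∉ w} {w | b ∉ w} := by
  intro w hw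
  rw [Function.comp_apply, applySub_applySub]
  exact mapsTo_applySub_avoiding hσ hw

theorem stmt4 (L : List (Word → Word))
    (hL : ∀ f ∈ L, f = applySub c1 ∘ applySub c1 ∨ f = applySub c2 ∘ applySub c2) :
    (1 : Letter) ∉ L.foldr (· ∘ ·) id [0] ∧
    (1 : Letter) ∉ L.foldr (· ∘ ·) id [2] ∧
    ∀ σ : Letter → Word, (σ = c1 ∨ σ = c2) →
      (1 : Letter) ∉ L.foldr (· ∘ ·) id (applySub σ [1]) := by
  have hφ : MapsTo (L.foldr (· ∘ ·) id) {w | (1 : Letter) ∉ w} {w | 1 ∉ w} := by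
    refine mapsTo_foldr_comp L fun f hf => ?_
    rcases hL f hf with rfl | rfl <;> exact mapsTo_applySub_sq_avoiding (by decide)
  refine ⟨hφ (by decide), hφ (by decide), ?_⟩
  rintro σ (rfl | rfl) <;> exact hφ (by decide)
end

section
/- Let x ∈ Δ and let (τ_n) be the directive sequence of x. Then (τ_n) is primitive if and only if there is no r ∈ ℕ such that τ_{r+2i} = τ_{r+2i+1} for all i ∈ ℕ (i.e., if and only if (τ_n) does not belong to C*{c1c1, c2c2}^ω). -/
/-- The continued fraction map `F_C` on `ℝ³` (defined on the nonnegative octant). -/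
noncomputable def FC (x : Fin 3 → ℝ) : Fin 3 → ℝ :=
  if x 2 ≤ x 0 then ![x 0 - x 2, x 2, x 1] else ![x 1, x 0, x 2 - x 0]

/-- The directive sequence of `x`: `τ_n = c1` if the first coordinate of `F_C^n(x)`
is at least its third coordinate, and `τ_n = c2` otherwise. -/
noncomputable def dirC (x : Fin 3 → ℝ) (n : ℕ) : Letter → Word :=
  if (FC^[n] x) 2 ≤ (FC^[n] x) 0 then c1 else c2

/-- A sequence of substitutions is primitive if for every `r` there is `r' > r` such
that every letter occurs in every image `τ_r τ_{r+1} ⋯ τ_{r'-1}(a)`. -/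
def Primitive (τ : ℕ → Letter → Word) : Prop :=
  ∀ r : ℕ, ∃ r', r < r' ∧ ∀ a b : Letter, b ∈ comps τ r (r' - r) [a]

/-! Whether `b` occurs in `τ_r ⋯ τ_{r+k-1}(a)` for every `a` is read off the set of letters whose
image meets `{b}`; along the sequence this set evolves by preimages under `c1` and `c2`, a dynamical
system on the subsets of the letters `{0, 1, 2}`. Preimages under `c1c1` and `c2c2` fix `{1}`, while
an unequal pair sends it to `{0, 1}` or `{1, 2}`; `{0, 1}` is fixed by `c2` and becomes everything at
the next `c1`, and symmetrically for `{1, 2}`. So if the aligned pairs from `r` on are all equal,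
the letter `1` is missing from some image of every window starting at `r`; otherwise unequal pairs
recur, both substitutions occur infinitely often, and every singleton eventually becomes
everything. -/

def subPreimage (σ : Letter → Word) (S : Finset Letter) : Finset Letter :=
  Finset.univ.filter fun a => ∃ b ∈ σ a, b ∈ S

def compsPreimage (τ : ℕ → Letter → Word) : ℕ → ℕ → Finset Letter → Finset Letter
  | _, 0, S => S
  | r, k + 1, S => compsPreimage τ (r + 1) k (subPreimage (τ r) S)

section Preimages

variable {τ : ℕ → Letter → Word}

lemma exists_mem_applySub_iff {σ : Letter → Word} {w : Word} {S : Finset Letter} :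
    (∃ b ∈ applySub σ w, b ∈ S) ↔ ∃ a ∈ w, a ∈ subPreimage σ S := by
  simp only [applySub, subPreimage, List.mem_flatten, List.mem_map, Finset.mem_filter,
    Finset.mem_univ, true_and]
  constructor
  · rintro ⟨b, ⟨_, ⟨a, ha, rfl⟩, hb⟩, hbS⟩
    exact ⟨a, ha, b, hb, hbS⟩
  · rintro ⟨a, ha, b, hb, hbS⟩
    exact ⟨b, ⟨σ a, ⟨a, ha, rfl⟩, hb⟩, hbS⟩

lemma mem_compsPreimage {r k : ℕ} {S : Finset Letter} {a : Letter} :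
    a ∈ compsPreimage τ r k S ↔ ∃ b ∈ comps τ r k [a], b ∈ S := by
  induction k generalizing r S with
  | zero => simp [compsPreimage, comps]
  | succ k ih =>
    rw [compsPreimage, ih, comps, Function.comp_apply, exists_mem_applySub_iff]

lemma compsPreimage_add (r k l : ℕ) (S : Finset Letter) :
    compsPreimage τ r (k + l) S = compsPreimage τ (r + k) l (compsPreimage τ r k S) := by
  induction k generalizing r S with
  | zero => rw [Nat.zero_add, Nat.add_zero]; rfl
  | succ k ih =>
    rw [Nat.succ_add, compsPreimage, ih, compsPreimage, Nat.add_right_comm, Nat.add_assoc]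

lemma subPreimage_univ {σ : Letter → Word} (hσ : ∀ a, σ a ≠ []) :
    subPreimage σ Finset.univ = Finset.univ := by
  ext a
  simpa [subPreimage] using List.exists_mem_of_ne_nil _ (hσ a)

lemma compsPreimage_univ (hτ : ∀ n a, τ n a ≠ []) (r k : ℕ) :
    compsPreimage τ r k Finset.univ = Finset.univ := by
  induction k generalizing r with
  | zero => rfl
  | succ k ih => rw [compsPreimage, subPreimage_univ (hτ r), ih]

lemma compsPreimage_eq_univ_of_le (hτ : ∀ n a, τ n a ≠ []) {r k l : ℕ} {S : Finset Letter}
    (hS : compsPreimage τ r k S = Finset.univ) (hkl : k ≤ l) :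
    compsPreimage τ r l S = Finset.univ := by
  obtain ⟨d, rfl⟩ := Nat.exists_eq_add_of_le hkl
  rw [compsPreimage_add, hS, compsPreimage_univ hτ]

lemma exists_compsPreimage_eq_univ {S : Finset Letter} {c : Letter → Word}
    (hc : subPreimage c S = Finset.univ)
    (hfix : ∀ n, τ n ≠ c → subPreimage (τ n) S = S) {r j : ℕ} (hj : τ (r + j) = c) :
    ∃ k, compsPreimage τ r k S = Finset.univ := by
  induction j generalizing r with
  | zero => exact ⟨1, by rw [Nat.add_zero] at hj; simp only [compsPreimage, hj, hc]⟩
  | succ j ih =>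
    by_cases hr : τ r = c
    · exact ⟨1, by simp only [compsPreimage, hr, hc]⟩
    · obtain ⟨k, hk⟩ := ih (r := r + 1) (by rwa [Nat.add_assoc, Nat.add_comm 1])
      exact ⟨k + 1, by rw [compsPreimage, hfix r hr, hk]⟩

end Preimages

section TwoSubstitutions

variable {τ : ℕ → Letter → Word}

lemma c1_ne_nil (a : Letter) : c1 a ≠ [] := by fin_cases a <;> decide

lemma c2_ne_nil (a : Letter) : c2 a ≠ [] := by fin_cases a <;> decide

lemma ne_nil_of_forall_eq_c1_or_c2 (hτ : ∀ n, τ n = c1 ∨ τ n = c2) (n : ℕ) (a : Letter) :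
    τ n a ≠ [] := by
  rcases hτ n with h | h <;> rw [h]
  exacts [c1_ne_nil a, c2_ne_nil a]

lemma subPreimage_subPreimage_self_one {c : Letter → Word} (hc : c = c1 ∨ c = c2) :
    subPreimage c (subPreimage c {1}) = {1} := by
  rcases hc with rfl | rfl <;> decide

lemma subPreimage_one_ne_univ {c : Letter → Word} (hc : c = c1 ∨ c = c2) :
    subPreimage c {1} ≠ Finset.univ := by
  rcases hc with rfl | rfl <;> decide

lemma compsPreimage_one_ne_univ (hτ : ∀ n, τ n = c1 ∨ τ n = c2) {r : ℕ}
    (hpair : ∀ i, τ (r + 2 * i) = τ (r + 2 * i + 1)) (k : ℕ) :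
    compsPreimage τ r k {1} ≠ Finset.univ := by
  have heven : ∀ i, compsPreimage τ r (2 * i) {1} = {1} := by
    intro i
    induction i with
    | zero => rfl
    | succ i ih =>
      rw [Nat.mul_succ, compsPreimage_add, ih, compsPreimage, compsPreimage, compsPreimage,
        ← hpair i, subPreimage_subPreimage_self_one (hτ _)]
  obtain ⟨i, rfl | rfl⟩ := Nat.even_or_odd' k
  · rw [heven]; decide
  · rw [compsPreimage_add, heven, compsPreimage, compsPreimage]
    exact subPreimage_one_ne_univ (hτ _)

lemma exists_eq_of_infinitely_often_ne (hτ : ∀ n, τ n = c1 ∨ τ n = c2)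
    (hne : ∀ s, ∃ i, τ (s + 2 * i) ≠ τ (s + 2 * i + 1)) {c : Letter → Word}
    (hc : c = c1 ∨ c = c2) (s : ℕ) : ∃ j, τ (s + j) = c := by
  obtain ⟨i, hi⟩ := hne s
  rcases hc with rfl | rfl <;> rcases hτ (s + 2 * i) with h | h <;>
    rcases hτ (s + 2 * i + 1) with h' | h'
  all_goals first
    | exact ⟨2 * i, h⟩
    | exact ⟨2 * i + 1, h'⟩
    | exact absurd (h.trans h'.symm) hi

lemma compsPreimage_two_one_eq_pair_of_ne (hτ : ∀ n, τ n = c1 ∨ τ n = c2) {r : ℕ}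
    (hr : τ r ≠ τ (r + 1)) :
    compsPreimage τ r 2 {1} = {0, 1} ∨ compsPreimage τ r 2 {1} = {1, 2} := by
  simp only [compsPreimage]
  rcases hτ r with h | h <;> rcases hτ (r + 1) with h' | h' <;> rw [h, h'] at hr ⊢ <;>
    first | exact absurd rfl hr | decide

lemma exists_compsPreimage_one_eq_pair (hτ : ∀ n, τ n = c1 ∨ τ n = c2) {r i : ℕ}
    (hi : τ (r + 2 * i) ≠ τ (r + 2 * i + 1)) :
    ∃ k, compsPreimage τ r k {1} = {0, 1} ∨ compsPreimage τ r k {1} = {1, 2} := by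
  induction i generalizing r with
  | zero => exact ⟨2, compsPreimage_two_one_eq_pair_of_ne hτ hi⟩
  | succ i ih =>
    by_cases hr : τ r = τ (r + 1)
    · obtain ⟨k, hk⟩ := ih (r := r + 2)
        (by rwa [Nat.mul_succ, ← Nat.add_assoc, Nat.add_right_comm r (2 * i) 2] at hi)
      refine ⟨2 + k, ?_⟩
      rwa [compsPreimage_add, compsPreimage, compsPreimage, compsPreimage, ← hr,
        subPreimage_subPreimage_self_one (hτ r)]
    · exact ⟨2, compsPreimage_two_one_eq_pair_of_ne hτ hr⟩

variable (hτ : ∀ n, τ n = c1 ∨ τ n = c2) (hne : ∀ s, ∃ i, τ (s + 2 * i) ≠ τ (s + 2 * i + 1))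
include hτ hne

lemma exists_compsPreimage_zero_one_eq_univ (r : ℕ) :
    ∃ k, compsPreimage τ r k {0, 1} = Finset.univ := by
  obtain ⟨j, hj⟩ := exists_eq_of_infinitely_often_ne hτ hne (Or.inl rfl) r
  refine exists_compsPreimage_eq_univ (by decide) (fun n hn => ?_) hj
  rw [(hτ n).resolve_left hn]; decide

lemma exists_compsPreimage_one_two_eq_univ (r : ℕ) :
    ∃ k, compsPreimage τ r k {1, 2} = Finset.univ := by
  obtain ⟨j, hj⟩ := exists_eq_of_infinitely_often_ne hτ hne (Or.inr rfl) r
  refine exists_compsPreimage_eq_univ (by decide) (fun n hn => ?_) hj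
  rw [(hτ n).resolve_right hn]; decide

lemma exists_compsPreimage_one_eq_univ (r : ℕ) :
    ∃ k, compsPreimage τ r k {1} = Finset.univ := by
  obtain ⟨i, hi⟩ := hne r
  obtain ⟨k, hk | hk⟩ := exists_compsPreimage_one_eq_pair hτ hi
  · obtain ⟨l, hl⟩ := exists_compsPreimage_zero_one_eq_univ hτ hne (r + k)
    exact ⟨k + l, by rw [compsPreimage_add, hk, hl]⟩
  · obtain ⟨l, hl⟩ := exists_compsPreimage_one_two_eq_univ hτ hne (r + k)
    exact ⟨k + l, by rw [compsPreimage_add, hk, hl]⟩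

lemma exists_compsPreimage_singleton_eq_univ (r : ℕ) (b : Letter) :
    ∃ k, compsPreimage τ r k {b} = Finset.univ := by
  have of_step : ∀ S, compsPreimage τ r 1 {b} = S →
      (∃ k, compsPreimage τ (r + 1) k S = Finset.univ) →
      ∃ k, compsPreimage τ r k {b} = Finset.univ := by
    rintro S hS ⟨k, hk⟩
    exact ⟨1 + k, by rw [compsPreimage_add, hS, hk]⟩
  fin_cases b
  · rcases hτ r with h | h
    · exact of_step _ (by simp only [compsPreimage, h]; decide)
        (exists_compsPreimage_zero_one_eq_univ hτ hne _)
    · exact of_step _ (by simp only [compsPreimage, h]; decide)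
        (exists_compsPreimage_one_eq_univ hτ hne _)
  · exact exists_compsPreimage_one_eq_univ hτ hne r
  · rcases hτ r with h | h
    · exact of_step _ (by simp only [compsPreimage, h]; decide)
        (exists_compsPreimage_one_eq_univ hτ hne _)
    · exact of_step _ (by simp only [compsPreimage, h]; decide)
        (exists_compsPreimage_one_two_eq_univ hτ hne _)

end TwoSubstitutions

theorem primitive_iff_not_exists_forall_pair_eq {τ : ℕ → Letter → Word}
    (hτ : ∀ n, τ n = c1 ∨ τ n = c2) :
    Primitive τ ↔ ¬ ∃ r : ℕ, ∀ i : ℕ, τ (r + 2 * i) = τ (r + 2 * i + 1) := by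
  constructor
  · rintro hP ⟨r, hpair⟩
    obtain ⟨r', -, hfull⟩ := hP r
    refine compsPreimage_one_ne_univ hτ hpair (r' - r) (Finset.eq_univ_iff_forall.2 fun a => ?_)
    exact mem_compsPreimage.2 ⟨1, hfull a 1, Finset.mem_singleton_self 1⟩
  · intro hne r
    push Not at hne
    choose k hk using exists_compsPreimage_singleton_eq_univ hτ hne r
    refine ⟨r + (∑ b, k b + 1), by omega, fun a b => ?_⟩
    have hb : compsPreimage τ r (∑ b, k b + 1) {b} = Finset.univ :=
      compsPreimage_eq_univ_of_le (ne_nil_of_forall_eq_c1_or_c2 hτ) (hk b)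
        ((Finset.single_le_sum (fun _ _ => Nat.zero_le _) (Finset.mem_univ b)).trans
          (Nat.le_succ _))
    obtain ⟨b', hb', hb'b⟩ := mem_compsPreimage.1 (hb ▸ Finset.mem_univ a)
    rwa [Nat.add_sub_cancel_left, ← Finset.mem_singleton.1 hb'b]

lemma dirC_eq_c1_or_c2 (x : Fin 3 → ℝ) (n : ℕ) : dirC x n = c1 ∨ dirC x n = c2 := by
  unfold dirC
  split_ifs
  exacts [Or.inl rfl, Or.inr rfl]

theorem stmt5_general (x : Fin 3 → ℝ) :
    Primitive (dirC x) ↔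
      ¬ ∃ r : ℕ, ∀ i : ℕ, dirC x (r + 2 * i) = dirC x (r + 2 * i + 1) :=
  primitive_iff_not_exists_forall_pair_eq (dirC_eq_c1_or_c2 x)

theorem stmt5 (x : Fin 3 → ℝ) (hpos : ∀ i, 0 ≤ x i) (hsum : x 0 + x 1 + x 2 = 1) :
    Primitive (dirC x) ↔
      ¬ ∃ r : ℕ, ∀ i : ℕ, dirC x (r + 2 * i) = dirC x (r + 2 * i + 1) :=
  stmt5_general x
end
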